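/- arXiv:0912.2418 — 6 statements merged into one kernel-verified Lean document; each statement's English description precedes it below -/
import Mathlib

section
/- Consider the coupled system ẋ^i = f_k(x^i) + ∑_{j} a_{ij} w_{ij} Γ (x^j − x^i) for i ∈ C_k. The cluster synchronization manifold S (states constant on each cluster) is invariant under this system for arbitrary continuous functions f_k if and only if for every pair of distinct clusters k ≠ k' and every i ∈ C_k, the quantity α_{i,k'} = ∑_{j∈C_{k'}} a_{ij} w_{ij} depends only on (k,k') and not on i. -/
/-!
Within a cluster, the coupling term of node `i` splits into one block per cluster `k'`; on a
state constant on clusters each block is `α_{i,k'} • Γ (x_{k'} - x_k)`, and the block of the own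
cluster vanishes. Hence equal intercluster sums make the vector field agree across a cluster.
Conversely, taking `f = 0` and the state equal to a vector `v` with `Γ v ≠ 0` on the cluster `k'`
and to `0` elsewhere, the vector field at a node of cluster `k ≠ k'` is exactly
`α_{i,k'} • Γ v`, so invariance forces `α_{i,k'}` to be independent of `i`.
-/

open Finset Matrix

section Clusters

variable {ι κ R M : Type*} [DecidableEq κ]

theorem sum_smul_eq_of_sum_eq_of_const [Semiring R] [AddCommMonoid M] [Module R M]
    {s : Finset ι} {β β' : ι → R} {u : ι → M} (hu : ∀ l ∈ s, ∀ l' ∈ s, u l = u l')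
    (hβ : ∑ l ∈ s, β l = ∑ l ∈ s, β' l) :
    ∑ l ∈ s, β l • u l = ∑ l ∈ s, β' l • u l := by
  rcases s.eq_empty_or_nonempty with rfl | ⟨l₀, hl₀⟩
  · simp
  · have hsum : ∀ γ : ι → R, ∑ l ∈ s, γ l • u l = (∑ l ∈ s, γ l) • u l₀ := fun γ => by
      rw [sum_smul]
      exact sum_congr rfl fun l hl => by rw [hu l hl l₀ hl₀]
    rw [hsum, hsum, hβ]

theorem sum_smul_eq_of_cluster_sums_eq [Fintype ι] [Fintype κ] [Semiring R] [AddCommMonoid M]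
    [Module R M] (c : ι → κ) (k₀ : κ) {β β' : ι → R} {u : ι → M}
    (hu : ∀ l l', c l = c l' → u l = u l') (hu₀ : ∀ l, c l = k₀ → u l = 0)
    (hβ : ∀ k ≠ k₀, ∑ l ∈ univ.filter (c · = k), β l = ∑ l ∈ univ.filter (c · = k), β' l) :
    ∑ l, β l • u l = ∑ l, β' l • u l := by
  rw [← sum_fiberwise univ c, ← sum_fiberwise univ c]
  refine sum_congr rfl fun k _ => ?_
  by_cases hk : k = k₀
  · have hzero : ∀ γ : ι → R, ∑ l ∈ univ.filter (c · = k), γ l • u l = 0 := fun γ =>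
      sum_eq_zero fun l hl => by rw [hu₀ l ((mem_filter.1 hl).2.trans hk), smul_zero]
    rw [hzero, hzero]
  · refine sum_smul_eq_of_sum_eq_of_const (fun l hl l' hl' => hu l l' ?_) (hβ k hk)
    rw [(mem_filter.1 hl).2, (mem_filter.1 hl').2]

def clusterIndicator [Zero M] (c : ι → κ) (k : κ) (v : M) : ι → M :=
  fun l => if c l = k then v else 0

theorem clusterIndicator_eq_of_eq [Zero M] (c : ι → κ) (k : κ) (v : M) {l l' : ι}
    (h : c l = c l') : clusterIndicator c k v l = clusterIndicator c k v l' := by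
  simp only [clusterIndicator, h]

theorem sum_smul_mulVec_clusterIndicator_sub [Fintype ι] {n : Type*} [Fintype n] [CommRing R]
    (c : ι → κ) {k k' : κ} (hkk' : k ≠ k') (Γ : Matrix n n R) (v : n → R) (β : ι → R)
    {i : ι} (hi : c i = k) :
    ∑ l, β l • Γ *ᵥ (clusterIndicator c k' v l - clusterIndicator c k' v i) =
      (∑ l ∈ univ.filter (c · = k'), β l) • Γ *ᵥ v := by
  rw [sum_smul, sum_filter]
  refine sum_congr rfl fun l _ => ?_
  simp only [clusterIndicator, hi, if_neg hkk', sub_zero]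
  split_ifs <;> simp

end Clusters

theorem exists_mulVec_ne_zero {m n R : Type*} [Fintype n] [Semiring R]
    {Γ : Matrix m n R} (hΓ : Γ ≠ 0) : ∃ v, Γ *ᵥ v ≠ 0 := by
  by_contra! h
  exact hΓ (ext_iff_mulVec.2 fun v => by rw [h v, zero_mulVec])

theorem invariance_iff_common_intercluster_coupling_general
    (m n K : ℕ) (c : Fin m → Fin K)
    (a : Fin m → Fin m → ℝ)
    (w : Fin m → Fin m → ℝ) (Γ : Matrix (Fin n) (Fin n) ℝ) (hΓ : Γ ≠ 0) :
    -- invariance: for every choice of continuous f₁,…,f_K the vector field is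
    -- tangent to the cluster synchronization manifold S
    (∀ f : Fin K → (Fin n → ℝ) → (Fin n → ℝ), (∀ k, Continuous (f k)) →
      ∀ x : Fin m → Fin n → ℝ, (∀ i j, c i = c j → x i = x j) →
        ∀ i j, c i = c j →
          (f (c i) (x i) + ∑ l, (a i l * w i l) • Γ.mulVec (x l - x i)) =
          (f (c j) (x j) + ∑ l, (a j l * w j l) • Γ.mulVec (x l - x j)))
    ↔
    (∀ k k' : Fin K, k ≠ k' → ∀ i i' : Fin m, c i = k → c i' = k →
      ∑ j ∈ univ.filter (fun j => c j = k'), a i j * w i j =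
      ∑ j ∈ univ.filter (fun j => c j = k'), a i' j * w i' j) := by
  constructor
  · intro H k k' hkk' i i' hi hi'
    obtain ⟨v, hv⟩ := exists_mulVec_ne_zero hΓ
    have key := H (fun _ _ => 0) (fun _ => continuous_const) (clusterIndicator c k' v)
      (fun _ _ => clusterIndicator_eq_of_eq c k' v) i i' (hi.trans hi'.symm)
    simp only [zero_add, sum_smul_mulVec_clusterIndicator_sub c hkk' Γ v _ hi,
      sum_smul_mulVec_clusterIndicator_sub c hkk' Γ v _ hi'] at key
    exact smul_left_injective ℝ hv key
  · intro hα f _ x hx i j hij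
    rw [hij, hx i j hij]
    congr 1
    refine sum_smul_eq_of_cluster_sums_eq c (c j) (fun l l' h => by rw [hx l l' h])
      (fun l hl => by rw [hx l j hl, sub_self, mulVec_zero]) fun k hk => ?_
    exact hα (c j) k (Ne.symm hk) i j hij rfl

theorem invariance_iff_common_intercluster_coupling
    (m n K : ℕ) (c : Fin m → Fin K) (hc : Function.Surjective c)
    (a : Fin m → Fin m → ℝ) (ha : ∀ i j, a i j = 0 ∨ a i j = 1)
    (w : Fin m → Fin m → ℝ) (Γ : Matrix (Fin n) (Fin n) ℝ) (hΓ : Γ ≠ 0) :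
    -- invariance: for every choice of continuous f₁,…,f_K the vector field is
    -- tangent to the cluster synchronization manifold S
    (∀ f : Fin K → (Fin n → ℝ) → (Fin n → ℝ), (∀ k, Continuous (f k)) →
      ∀ x : Fin m → Fin n → ℝ, (∀ i j, c i = c j → x i = x j) →
        ∀ i j, c i = c j →
          (f (c i) (x i) + ∑ l, (a i l * w i l) • Γ.mulVec (x l - x i)) =
          (f (c j) (x j) + ∑ l, (a j l * w j l) • Γ.mulVec (x l - x j)))
    ↔
    (∀ k k' : Fin K, k ≠ k' → ∀ i i' : Fin m, c i = k → c i' = k →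
      ∑ j ∈ univ.filter (fun j => c j = k'), a i j * w i j =
      ∑ j ∈ univ.filter (fun j => c j = k'), a i' j * w i' j) :=
  invariance_iff_common_intercluster_coupling_general m n K c a w Γ hΓ
end

section
/- Let M be an m×m real matrix whose symmetric part M^s = (M+Mᵀ)/2 satisfies uᵀ M^s u ≤ 0 for all u in a subspace T₁ ⊆ ℝ^m. Let Γ = Cᵀ C be an n×n positive semidefinite matrix. Then for every x ∈ ℝ^{mn} such that (I_m ⊗ C)x belongs to the subspace T₁⊗ℝ^n := {u ∈ ℝ^{mn} : each n-block pattern satisfies the defining linear constraints of T₁ componentwise}, one has xᵀ (M^s ⊗ Γ) x ≤ 0. In particular, if T₁ = {u ∈ ℝ^m : ∑_{i∈C_k} d_i u_i = 0 ∀k}, then for x with ∑_{i∈C_k} d_i x^i = 0 for all k one has xᵀ(M^s ⊗ Γ)x ≤ 0. -/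
/-! Since `Γ = CᵀC`, the Gram entries `xⁱ ⬝ Γ xʲ` are `∑ₗ (Cxⁱ)ₗ (Cxʲ)ₗ`, so exchanging sums writes
`xᵀ (Mˢ ⊗ Γ) x` as `∑ₗ uₗᵀ Mˢ uₗ`, where `uₗ = ((Cx¹)ₗ, …, (Cxᵐ)ₗ)` lies in `T₁` by assumption;
each term is nonpositive. -/

open Finset Matrix

theorem Matrix.dotProduct_transpose_mul_mulVec {R m n : Type*} [CommSemiring R] [Fintype m]
    [Fintype n] (C : Matrix m n R) (u v : n → R) :
    u ⬝ᵥ (Cᵀ * C) *ᵥ v = C *ᵥ u ⬝ᵥ C *ᵥ v := by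
  rw [← mulVec_mulVec, dotProduct_mulVec, vecMul_transpose]

theorem Matrix.sum_mul_dotProduct_eq_sum_dotProduct_mulVec {R ι κ : Type*} [CommSemiring R]
    [Fintype ι] [Fintype κ] (A : Matrix ι ι R) (y : ι → κ → R) :
    ∑ i, ∑ j, A i j * (y i ⬝ᵥ y j) = ∑ l, (fun i => y i l) ⬝ᵥ A *ᵥ fun i => y i l := by
  simp only [dotProduct, mulVec, mul_sum]
  rw [sum_congr rfl fun i _ => sum_comm, sum_comm]
  refine sum_congr rfl fun l _ => ?_
  exact sum_congr rfl fun i _ => sum_congr rfl fun j _ => by ring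

theorem kronecker_quadratic_form_nonpos
    (m n : ℕ) (M : Matrix (Fin m) (Fin m) ℝ) (T₁ : Submodule ℝ (Fin m → ℝ))
    (hM : ∀ u ∈ T₁, u ⬝ᵥ (((1:ℝ)/2) • (M + Mᵀ)).mulVec u ≤ 0)
    (C : Matrix (Fin n) (Fin n) ℝ)
    (x : Fin m → Fin n → ℝ)
    -- (I_m ⊗ C) x belongs to T₁ ⊗ ℝ^n: each componentwise m-vector of Cx lies in T₁
    (hx : ∀ l : Fin n, (fun i => C.mulVec (x i) l) ∈ T₁) :
    ∑ i, ∑ j, (((1:ℝ)/2) • (M + Mᵀ)) i j * (x i ⬝ᵥ (Cᵀ * C).mulVec (x j)) ≤ 0 := by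
  simp only [dotProduct_transpose_mul_mulVec]
  rw [sum_mul_dotProduct_eq_sum_dotProduct_mulVec]
  exact sum_nonpos fun l _ => hM _ (hx l)
end

section
/- Let L be the Laplacian of a connected bi-directed weighted graph on m vertices (L has nonnegative off-diagonal entries, zero row sums, and is irreducible), and let d = (d_1,…,d_m) be the positive left eigenvector of L for eigenvalue 0 (guaranteed by Perron–Frobenius), D = diag(d). Then for every nonzero u ∈ ℝ^m with dᵀu = 0, one has uᵀ(DL + LᵀD)u < 0. -/
/-
For `B = D L + Lᵀ D` with `D = diag d` and `d` a positive left null vector of `L`, `B` is symmetric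
with nonnegative off-diagonal entries and zero row sums, so its quadratic form is the negated
Dirichlet energy `-½ ∑ᵢⱼ Bᵢⱼ (uᵢ - uⱼ)²`. A nonzero `u` with `dᵀu = 0` is not constant, and
irreducibility yields an edge `Lᵢⱼ ≠ 0` across a level set of `u`, which makes that energy positive.
-/

open Matrix

/-- A matrix is irreducible iff the associated directed graph is strongly connected:
for every nonempty proper subset of indices there is a nonzero entry leaving it. -/
def MatrixIrreducible {m : ℕ} (L : Matrix (Fin m) (Fin m) ℝ) : Prop :=
  ∀ S : Set (Fin m), S.Nonempty → S ≠ Set.univ → ∃ i ∈ S, ∃ j ∉ S, L i j ≠ 0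

namespace Matrix

variable {ι : Type*} [Fintype ι]

theorem dotProduct_mulVec_eq_neg_sum_sq_div_two (B : Matrix ι ι ℝ)
    (hrow : ∀ i, ∑ j, B i j = 0) (hcol : ∀ j, ∑ i, B i j = 0) (u : ι → ℝ) :
    u ⬝ᵥ B *ᵥ u = -(∑ i, ∑ j, B i j * (u i - u j) ^ 2) / 2 := by
  have hleft : ∑ i, ∑ j, B i j * u i ^ 2 = 0 := by
    simp [← Finset.sum_mul, hrow]
  have hright : ∑ i, ∑ j, B i j * u j ^ 2 = 0 := by
    rw [Finset.sum_comm]; simp [← Finset.sum_mul, hcol]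
  have hexpand : ∑ i, ∑ j, B i j * (u i - u j) ^ 2 =
      ∑ i, ∑ j, B i j * u i ^ 2 - 2 * ∑ i, ∑ j, u i * (B i j * u j) +
        ∑ i, ∑ j, B i j * u j ^ 2 := by
    simp only [Finset.mul_sum, ← Finset.sum_sub_distrib, ← Finset.sum_add_distrib]
    refine Finset.sum_congr rfl fun i _ => Finset.sum_congr rfl fun j _ => ?_
    ring
  have hform : u ⬝ᵥ B *ᵥ u = ∑ i, ∑ j, u i * (B i j * u j) := by
    simp only [dotProduct, mulVec, Finset.mul_sum]
  rw [hexpand, hleft, hright, hform]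
  ring

theorem sum_sum_mul_sub_sq_pos (B : Matrix ι ι ℝ) (hoff : ∀ i j, i ≠ j → 0 ≤ B i j)
    {u : ι → ℝ} {i j : ι} (hB : 0 < B i j) (hu : u i ≠ u j) :
    0 < ∑ i, ∑ j, B i j * (u i - u j) ^ 2 := by
  have hterm : ∀ i j, 0 ≤ B i j * (u i - u j) ^ 2 := by
    intro i j
    rcases eq_or_ne i j with rfl | hij
    · simp
    · exact mul_nonneg (hoff i j hij) (sq_nonneg _)
  calc 0 < B i j * (u i - u j) ^ 2 := mul_pos hB (sq_pos_of_ne_zero (sub_ne_zero.mpr hu))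
    _ ≤ ∑ j', B i j' * (u i - u j') ^ 2 :=
      Finset.single_le_sum (fun j' _ => hterm i j') (Finset.mem_univ j)
    _ ≤ ∑ i', ∑ j', B i' j' * (u i' - u j') ^ 2 :=
      Finset.single_le_sum (f := fun i' => ∑ j', B i' j' * (u i' - u j') ^ 2)
        (fun i' _ => Finset.sum_nonneg fun j' _ => hterm i' j') (Finset.mem_univ i)

theorem diagonal_mul_add_transpose_mul_diagonal_apply [DecidableEq ι] (d : ι → ℝ)
    (L : Matrix ι ι ℝ) (i j : ι) :
    (diagonal d * L + Lᵀ * diagonal d) i j = d i * L i j + L j i * d j := by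
  simp [mul_comm]

section Symmetrization

variable [DecidableEq ι] {d : ι → ℝ} {L : Matrix ι ι ℝ}

theorem sum_diagonal_mul_add_transpose_mul_diagonal_apply (hrow : ∀ i, ∑ j, L i j = 0)
    (hleft : d ᵥ* L = 0) (i : ι) : ∑ j, (diagonal d * L + Lᵀ * diagonal d) i j = 0 := by
  have hcol : ∑ j, L j i * d j = (d ᵥ* L) i := by
    simp only [vecMul, dotProduct, mul_comm]
  simp [Finset.sum_add_distrib, ← Finset.mul_sum, hrow, hcol, hleft]

theorem diagonal_mul_add_transpose_mul_diagonal_apply_nonneg (hd : ∀ i, 0 < d i)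
    (hoff : ∀ i j, i ≠ j → 0 ≤ L i j) {i j : ι} (hij : i ≠ j) :
    0 ≤ (diagonal d * L + Lᵀ * diagonal d) i j := by
  rw [diagonal_mul_add_transpose_mul_diagonal_apply]
  exact add_nonneg (mul_nonneg (hd i).le (hoff i j hij))
    (mul_nonneg (hoff j i hij.symm) (hd j).le)

theorem diagonal_mul_add_transpose_mul_diagonal_apply_pos (hd : ∀ i, 0 < d i)
    (hoff : ∀ i j, i ≠ j → 0 ≤ L i j) {i j : ι} (hij : i ≠ j) (hL : L i j ≠ 0) :
    0 < (diagonal d * L + Lᵀ * diagonal d) i j := by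
  rw [diagonal_mul_add_transpose_mul_diagonal_apply]
  exact add_pos_of_pos_of_nonneg (mul_pos (hd i) ((hoff i j hij).lt_of_ne' hL))
    (mul_nonneg (hoff j i hij.symm) (hd j).le)

end Symmetrization

end Matrix

theorem exists_apply_ne_of_dotProduct_eq_zero {ι : Type*} [Fintype ι] {d u : ι → ℝ}
    (hd : ∀ i, 0 < d i) (hu : u ≠ 0) (hdu : d ⬝ᵥ u = 0) : ∃ a b, u a ≠ u b := by
  obtain ⟨a, ha⟩ := Function.ne_iff.mp hu
  by_contra! hconst
  have : d ⬝ᵥ u = (∑ i, d i) * u a := by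
    simp only [dotProduct, Finset.sum_mul, hconst _ a]
  have hsum : 0 < ∑ i, d i := Finset.sum_pos (fun i _ => hd i) ⟨a, Finset.mem_univ a⟩
  exact mul_ne_zero hsum.ne' ha (this ▸ hdu)

theorem MatrixIrreducible.exists_ne_zero_of_apply_ne {m : ℕ} {L : Matrix (Fin m) (Fin m) ℝ}
    (hirr : MatrixIrreducible L) {α : Type*} {u : Fin m → α} {a b : Fin m} (hab : u a ≠ u b) :
    ∃ i j, L i j ≠ 0 ∧ u i ≠ u j := by
  obtain ⟨i, hi, j, hj, hL⟩ :=
    hirr {k | u k = u a} ⟨a, rfl⟩ fun h => hab (Set.eq_univ_iff_forall.mp h b).symm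
  exact ⟨i, j, hL, fun h => hj (h ▸ hi : u j = u a)⟩

theorem connected_laplacian_negative_on_transverse
    (m : ℕ) (L : Matrix (Fin m) (Fin m) ℝ)
    (hoff : ∀ i j, i ≠ j → 0 ≤ L i j)
    (hrow : ∀ i, ∑ j, L i j = 0)
    (hirr : MatrixIrreducible L)
    (d : Fin m → ℝ) (hd : ∀ i, 0 < d i)
    (hleft : Matrix.vecMul d L = 0) :
    ∀ u : Fin m → ℝ, u ≠ 0 → d ⬝ᵥ u = 0 →
      u ⬝ᵥ ((Matrix.diagonal d * L + Lᵀ * Matrix.diagonal d).mulVec u) < 0 := by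
  intro u hu hdu
  set B := diagonal d * L + Lᵀ * diagonal d
  have hBrow : ∀ i, ∑ j, B i j = 0 :=
    sum_diagonal_mul_add_transpose_mul_diagonal_apply hrow hleft
  have hBcol : ∀ j, ∑ i, B i j = 0 := fun j => by
    simpa only [B, diagonal_mul_add_transpose_mul_diagonal_apply, add_comm, mul_comm] using hBrow j
  obtain ⟨a, b, hab⟩ := exists_apply_ne_of_dotProduct_eq_zero hd hu hdu
  obtain ⟨i, j, hLij, huij⟩ := hirr.exists_ne_zero_of_apply_ne hab
  have hij : i ≠ j := ne_of_apply_ne u huij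
  rw [B.dotProduct_mulVec_eq_neg_sum_sq_div_two hBrow hBcol]
  have henergy := B.sum_sum_mul_sub_sq_pos
    (fun _ _ => diagonal_mul_add_transpose_mul_diagonal_apply_nonneg hd hoff)
    (diagonal_mul_add_transpose_mul_diagonal_apply_pos hd hoff hij hLij) huij
  linarith
end

section
/- Let S = (DL)^s, where L is an irreducible m×m Laplacian with zero row sums and D = diag(d), with d the positive left null vector of L. Then S is symmetric, has all row sums zero, is irreducible, has largest eigenvalue 0 with eigenvector e = (1,…,1)ᵀ, and its second largest eigenvalue is strictly negative; consequently uᵀSu ≤ λ₂(S) uᵀu < 0 for all nonzero u orthogonal to e. -/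
open Matrix

section Aux

variable {m : ℕ}

private lemma quad_eq (A : Matrix (Fin m) (Fin m) ℝ) (hsym : Aᵀ = A)
    (hrow : ∀ i, ∑ j, A i j = 0) (u : Fin m → ℝ) :
    u ⬝ᵥ A.mulVec u = -(1/2) * ∑ i, ∑ j, A i j * (u i - u j)^2 := by
  have hcol : ∀ j, ∑ i, A i j = 0 := by
    intro j
    have h : ∀ i, A i j = A j i := fun i => by conv_lhs => rw [← hsym, Matrix.transpose_apply]
    simp_rw [h]; exact hrow j
  have h1 : ∑ i, ∑ j, A i j * (u i)^2 = 0 := by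
    simp_rw [← Finset.sum_mul, hrow, zero_mul, Finset.sum_const_zero]
  have h2 : ∑ i, ∑ j, A i j * (u j)^2 = 0 := by
    rw [Finset.sum_comm]
    simp_rw [← Finset.sum_mul, hcol, zero_mul, Finset.sum_const_zero]
  have hQ : u ⬝ᵥ A.mulVec u = ∑ i, ∑ j, A i j * u i * u j := by
    simp only [dotProduct, mulVec, Finset.mul_sum]
    exact Finset.sum_congr rfl fun i _ => Finset.sum_congr rfl fun j _ => by ring
  have expand : ∑ i, ∑ j, A i j * (u i - u j)^2
      = ∑ i, ∑ j, (A i j * (u i)^2 + A i j * (u j)^2 - 2 * (A i j * u i * u j)) :=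
    Finset.sum_congr rfl fun i _ => Finset.sum_congr rfl fun j _ => by ring
  rw [hQ, expand]
  simp only [Finset.sum_sub_distrib, Finset.sum_add_distrib, h1, h2, ← Finset.mul_sum]
  ring

private lemma quad_nonpos (A : Matrix (Fin m) (Fin m) ℝ) (hsym : Aᵀ = A)
    (hrow : ∀ i, ∑ j, A i j = 0) (hoff : ∀ i j, i ≠ j → 0 ≤ A i j) (u : Fin m → ℝ) :
    u ⬝ᵥ A.mulVec u ≤ 0 := by
  rw [quad_eq A hsym hrow u]
  have hT : 0 ≤ ∑ i, ∑ j, A i j * (u i - u j)^2 := by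
    apply Finset.sum_nonneg; intro i _
    apply Finset.sum_nonneg; intro j _
    by_cases hij : i = j
    · subst hij; simp
    · exact mul_nonneg (hoff i j hij) (sq_nonneg _)
  linarith

private lemma quad_neg (hm : 0 < m) (A : Matrix (Fin m) (Fin m) ℝ) (hsym : Aᵀ = A)
    (hrow : ∀ i, ∑ j, A i j = 0) (hoff : ∀ i j, i ≠ j → 0 ≤ A i j)
    (hirr : MatrixIrreducible A) (u : Fin m → ℝ) (hu : u ≠ 0) (hsum : ∑ i, u i = 0) :
    u ⬝ᵥ A.mulVec u < 0 := by
  rcases lt_or_eq_of_le (quad_nonpos A hsym hrow hoff u) with h | h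
  · exact h
  exfalso
  -- Q u = 0 implies each term of the sum is zero
  have hQ := quad_eq A hsym hrow u
  rw [h] at hQ
  have hT : ∑ i, ∑ j, A i j * (u i - u j)^2 = 0 := by linarith
  have hterm : ∀ i j, A i j * (u i - u j)^2 = 0 := by
    have nonneg : ∀ i j, 0 ≤ A i j * (u i - u j)^2 := by
      intro i j
      by_cases hij : i = j
      · subst hij; simp
      · exact mul_nonneg (hoff i j hij) (sq_nonneg _)
    intro i j
    have h1 : ∀ i ∈ Finset.univ, (0:ℝ) ≤ ∑ j, A i j * (u i - u j)^2 :=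
      fun i _ => Finset.sum_nonneg fun j _ => nonneg i j
    have h2 := (Finset.sum_eq_zero_iff_of_nonneg h1).mp hT i (Finset.mem_univ i)
    exact (Finset.sum_eq_zero_iff_of_nonneg (fun j _ => nonneg i j)).mp h2 j (Finset.mem_univ j)
  have heq : ∀ i j, A i j ≠ 0 → u i = u j := by
    intro i j hA
    have := hterm i j
    rcases mul_eq_zero.mp this with h' | h'
    · exact absurd h' hA
    · have := pow_eq_zero_iff (n := 2) (by norm_num) |>.mp h'
      linarith [this]
  -- u must be constant by irreducibility
  set i0 : Fin m := ⟨0, hm⟩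
  set T : Set (Fin m) := {j | u j = u i0} with hT'
  have hconst : T = Set.univ := by
    by_contra hne
    obtain ⟨i, hiT, j, hjT, hAij⟩ := hirr T ⟨i0, rfl⟩ hne
    exact hjT ((heq i j hAij).symm.trans hiT)
  have huc : ∀ j, u j = u i0 := fun j => (Set.eq_univ_iff_forall.mp hconst) j
  have : (m : ℝ) * u i0 = 0 := by
    rw [← hsum]
    simp [huc, Finset.sum_const, Finset.card_univ]
  have hu0 : u i0 = 0 := by
    have hmne : (m : ℝ) ≠ 0 := Nat.cast_ne_zero.mpr hm.ne'
    exact (mul_eq_zero.mp this).resolve_left hmne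
  exact hu ((funext fun j => (huc j).trans hu0))

private lemma master (hm : 0 < m) (A : Matrix (Fin m) (Fin m) ℝ) (hsym : Aᵀ = A)
    (hArow : ∀ i, ∑ j, A i j = 0) (hoff : ∀ i j, i ≠ j → 0 ≤ A i j)
    (hirr : MatrixIrreducible A) :
    Aᵀ = A ∧
    A.mulVec (fun _ => (1:ℝ)) = 0 ∧
    MatrixIrreducible A ∧
    (∀ u : Fin m → ℝ, u ⬝ᵥ A.mulVec u ≤ 0) ∧
    (∃ lam2 : ℝ, lam2 < 0 ∧
      (∀ u : Fin m → ℝ, (fun _ => (1:ℝ)) ⬝ᵥ u = 0 →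
        u ⬝ᵥ A.mulVec u ≤ lam2 * (u ⬝ᵥ u)) ∧
      (∀ u : Fin m → ℝ, u ≠ 0 → (fun _ => (1:ℝ)) ⬝ᵥ u = 0 →
        u ⬝ᵥ A.mulVec u < 0)) := by
  have hdot1 : ∀ u : Fin m → ℝ, (fun _ => (1:ℝ)) ⬝ᵥ u = ∑ i, u i := by
    intro u; simp [dotProduct]
  have hdotself : ∀ u : Fin m → ℝ, u ⬝ᵥ u = ∑ i, u i * u i := fun u => rfl
  refine ⟨hsym, ?_, hirr, quad_nonpos A hsym hArow hoff, ?_⟩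
  · funext i
    simp only [mulVec, dotProduct, mul_one, Pi.zero_apply]
    exact hArow i
  -- positivity of sum of squares for nonzero vectors
  have hpos_s : ∀ u : Fin m → ℝ, u ≠ 0 → 0 < ∑ i, u i * u i := by
    intro u hu
    obtain ⟨i, hi⟩ := Function.ne_iff.mp hu
    have hi' : u i ≠ 0 := by simpa using hi
    have h1 : 0 < u i * u i := mul_self_pos.mpr hi'
    have h2 : u i * u i ≤ ∑ j, u j * u j :=
      Finset.single_le_sum (fun j _ => mul_self_nonneg (u j)) (Finset.mem_univ i)
    linarith
  -- homogeneity of the quadratic form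
  have hhom : ∀ (c : ℝ) (u : Fin m → ℝ),
      (c • u) ⬝ᵥ A.mulVec (c • u) = c * c * (u ⬝ᵥ A.mulVec u) := by
    intro c u
    rw [Matrix.mulVec_smul, smul_dotProduct, dotProduct_smul,
      smul_eq_mul, smul_eq_mul]
    ring
  -- the constraint set
  set K : Set (Fin m → ℝ) := {v | ∑ i, v i = 0 ∧ ∑ i, v i * v i = 1} with hK
  -- normalization: nonzero vectors with zero sum give members of K
  have hnormal : ∀ u : Fin m → ℝ, u ≠ 0 → ∑ i, u i = 0 →
      ∃ c : ℝ, c * c = (∑ i, u i * u i)⁻¹ ∧ (c • u) ∈ K := by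
    intro u hu hsum
    have hs := hpos_s u hu
    refine ⟨(Real.sqrt (∑ i, u i * u i))⁻¹, ?_, ?_, ?_⟩
    · rw [← mul_inv, Real.mul_self_sqrt hs.le]
    · simp only [Pi.smul_apply, smul_eq_mul, ← Finset.mul_sum, hsum, mul_zero]
    · have hc2 : (Real.sqrt (∑ i, u i * u i))⁻¹ * (Real.sqrt (∑ i, u i * u i))⁻¹
          = (∑ i, u i * u i)⁻¹ := by rw [← mul_inv, Real.mul_self_sqrt hs.le]
      have : ∑ i, ((Real.sqrt (∑ i, u i * u i))⁻¹ * u i) * ((Real.sqrt (∑ i, u i * u i))⁻¹ * u i)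
          = ((Real.sqrt (∑ i, u i * u i))⁻¹ * (Real.sqrt (∑ i, u i * u i))⁻¹) * ∑ i, u i * u i := by
        rw [Finset.mul_sum]; exact Finset.sum_congr rfl fun i _ => by ring
      simp only [Pi.smul_apply, smul_eq_mul]
      rw [this, hc2, inv_mul_cancel₀ hs.ne']
  by_cases hKne : K.Nonempty
  · -- compactness argument
    have hclosed : IsClosed K := by
      have : K = {v : Fin m → ℝ | ∑ i, v i = 0} ∩ {v | ∑ i, v i * v i = 1} := rfl
      rw [this]
      exact IsClosed.inter (isClosed_eq (by fun_prop) continuous_const)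
        (isClosed_eq (by fun_prop) continuous_const)
    have hbdd : K ⊆ Metric.closedBall 0 1 := by
      intro v hv
      rw [Metric.mem_closedBall, dist_zero_right]
      rw [pi_norm_le_iff_of_nonneg zero_le_one]
      intro i
      rw [Real.norm_eq_abs, abs_le_one_iff_mul_self_le_one]
      calc v i * v i ≤ ∑ j, v j * v j :=
            Finset.single_le_sum (fun j _ => mul_self_nonneg (v j)) (Finset.mem_univ i)
        _ = 1 := hv.2
    have hKcomp : IsCompact K :=
      (isCompact_closedBall (0 : Fin m → ℝ) 1).of_isClosed_subset hclosed hbdd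
    have hcont : Continuous fun v : Fin m → ℝ => v ⬝ᵥ A.mulVec v := by
      simp only [dotProduct, mulVec]
      fun_prop
    obtain ⟨v0, hv0K, hmax⟩ := hKcomp.exists_isMaxOn hKne hcont.continuousOn
    refine ⟨v0 ⬝ᵥ A.mulVec v0, ?_, ?_, ?_⟩
    · have h2 : ∑ i, v0 i * v0 i = 1 := hv0K.2
      apply quad_neg hm A hsym hArow hoff hirr v0 _ hv0K.1
      intro h0
      rw [h0] at h2
      simp at h2
    · intro u hu1
      rw [hdot1] at hu1
      by_cases hu : u = 0
      · subst hu
        simp [dotProduct]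
      · obtain ⟨c, hc2, hcK⟩ := hnormal u hu hu1
        have hs := hpos_s u hu
        have hle : (c • u) ⬝ᵥ A.mulVec (c • u) ≤ v0 ⬝ᵥ A.mulVec v0 := hmax hcK
        rw [hhom, hc2] at hle
        have := mul_le_mul_of_nonneg_left hle hs.le
        rw [← mul_assoc, mul_inv_cancel₀ hs.ne', one_mul] at this
        rw [hdotself]
        linarith
    · intro u hu hu1
      rw [hdot1] at hu1
      exact quad_neg hm A hsym hArow hoff hirr u hu hu1
  · -- K empty: every zero-sum vector is zero
    have hzero : ∀ u : Fin m → ℝ, ∑ i, u i = 0 → u = 0 := by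
      intro u hsum
      by_contra hu
      obtain ⟨c, _, hcK⟩ := hnormal u hu hsum
      exact hKne ⟨c • u, hcK⟩
    refine ⟨-1, by norm_num, ?_, ?_⟩
    · intro u hu1
      rw [hdot1] at hu1
      rw [hzero u hu1]
      simp [dotProduct]
    · intro u hu hu1
      rw [hdot1] at hu1
      exact absurd (hzero u hu1) hu

end Aux

theorem symmetrized_laplacian_properties
    (m : ℕ) (hm : 0 < m) (L : Matrix (Fin m) (Fin m) ℝ)
    (hoff : ∀ i j, i ≠ j → 0 ≤ L i j)
    (hrow : ∀ i, ∑ j, L i j = 0)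
    (hirr : MatrixIrreducible L)
    (d : Fin m → ℝ) (hd : ∀ i, 0 < d i)
    (hleft : Matrix.vecMul d L = 0) :
    letI S : Matrix (Fin m) (Fin m) ℝ :=
      ((1:ℝ)/2) • (Matrix.diagonal d * L + Lᵀ * Matrix.diagonal d)
    Sᵀ = S ∧
    S.mulVec (fun _ => (1:ℝ)) = 0 ∧
    MatrixIrreducible S ∧
    (∀ u : Fin m → ℝ, u ⬝ᵥ S.mulVec u ≤ 0) ∧
    (∃ lam2 : ℝ, lam2 < 0 ∧
      (∀ u : Fin m → ℝ, (fun _ => (1:ℝ)) ⬝ᵥ u = 0 →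
        u ⬝ᵥ S.mulVec u ≤ lam2 * (u ⬝ᵥ u)) ∧
      (∀ u : Fin m → ℝ, u ≠ 0 → (fun _ => (1:ℝ)) ⬝ᵥ u = 0 →
        u ⬝ᵥ S.mulVec u < 0)) := by
  set A : Matrix (Fin m) (Fin m) ℝ :=
    ((1:ℝ)/2) • (Matrix.diagonal d * L + Lᵀ * Matrix.diagonal d) with hAdef
  have hA : ∀ i j, A i j = (1/2) * (d i * L i j + L j i * d j) := by
    intro i j
    simp only [hAdef, Matrix.smul_apply, Matrix.add_apply, Matrix.diagonal_mul,
      Matrix.mul_diagonal, Matrix.transpose_apply, smul_eq_mul]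
  have hsym : Aᵀ = A := by
    ext i j
    rw [Matrix.transpose_apply, hA, hA]
    ring
  have hArow : ∀ i, ∑ j, A i j = 0 := by
    intro i
    have hcolL : ∑ j, d j * L j i = 0 := congrFun hleft i
    calc ∑ j, A i j
        = ∑ j, ((1/2:ℝ) * d i * L i j + (1/2) * (d j * L j i)) :=
          Finset.sum_congr rfl fun j _ => by rw [hA]; ring
      _ = (1/2) * d i * (∑ j, L i j) + (1/2) * ∑ j, d j * L j i := by
          rw [Finset.sum_add_distrib, ← Finset.mul_sum, ← Finset.mul_sum]
      _ = 0 := by rw [hrow i, hcolL]; ring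
  have hoffA : ∀ i j, i ≠ j → 0 ≤ A i j := by
    intro i j hij
    rw [hA]
    have h1 := hoff i j hij
    have h2 := hoff j i (Ne.symm hij)
    have := (hd i).le
    have := (hd j).le
    positivity
  have hirrA : MatrixIrreducible A := by
    intro T hTne hTuniv
    obtain ⟨i, hi, j, hj, hLij⟩ := hirr T hTne hTuniv
    refine ⟨i, hi, j, hj, ?_⟩
    have hij : i ≠ j := fun h => hj (h ▸ hi)
    have hL1 : 0 < L i j := lt_of_le_of_ne (hoff i j hij) (Ne.symm hLij)
    have hL2 : 0 ≤ L j i := hoff j i (Ne.symm hij)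
    rw [hA]
    have h1 : 0 < d i * L i j := mul_pos (hd i) hL1
    have h2 : 0 ≤ L j i * d j := mul_nonneg hL2 (hd j).le
    positivity
  exact master hm A hsym hArow hoffA hirrA
end

section
/- Let L = diag(L_1, L_2) be a block-diagonal Laplacian corresponding to two connected components with vertex sets V_1 and V_2, and suppose some cluster C_1 of the partition intersects both V_1 and V_2, and moreover C_1 is isolated (no edges between C_1 and other clusters, so L restricted to rows of C_1 vanishes off C_1, and Lu = 0 for any u supported and constant on C_1∩V_1 and on C_1∩V_2). Then for every positive diagonal matrix D = diag(d) there exists a nonzero vector u in the transverse space T = {u : ∑_{i∈C_k} d_i u_i = 0 ∀k} with uᵀ D L u = 0. In particular, the strict inequality (DL + LᵀD)|_T < 0 fails for every positive diagonal D. -/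
/-!
Split the cluster `C` into `P = C ∩ V₁` and `Q = C \ V₁`, with weights `a = ∑_P d`, `b = ∑_Q d`,
and take `u = b` on `P`, `u = -a` on `Q`, `u = 0` off `C`. Then `∑_C d u = ab - ba = 0`, so `u` lies
in the transverse space, while `u` is constant on both halves of the isolated cluster, so `L u = 0`
and every quadratic form `u ⬝ᵥ (D L + Lᵀ D) u` vanishes.
-/

open Finset Matrix

section QuadraticForm

variable {n R : Type*} [Fintype n] [CommSemiring R]

theorem dotProduct_mul_mulVec_eq_zero {A L : Matrix n n R} {u : n → R} (hLu : L *ᵥ u = 0) :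
    u ⬝ᵥ ((A * L) *ᵥ u) = 0 := by
  rw [← mulVec_mulVec, hLu, mulVec_zero, dotProduct_zero]

theorem dotProduct_transpose_mul_mulVec_eq_zero {A L : Matrix n n R} {u : n → R}
    (hLu : L *ᵥ u = 0) : u ⬝ᵥ ((Lᵀ * A) *ᵥ u) = 0 := by
  rw [← mulVec_mulVec, dotProduct_mulVec, vecMul_transpose, hLu, zero_dotProduct]

end QuadraticForm

section BalancedSplit

variable {ι : Type*} [DecidableEq ι] (d : ι → ℝ) (s : Finset ι) (A : Set ι) [DecidablePred (· ∈ A)]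

noncomputable def balancedSplit (i : ι) : ℝ :=
  if i ∈ s then
    if i ∈ A then ∑ j ∈ s.filter (· ∉ A), d j else -∑ j ∈ s.filter (· ∈ A), d j
  else 0

variable {d s A}

theorem balancedSplit_of_notMem {i : ι} (hi : i ∉ s) : balancedSplit d s A i = 0 :=
  if_neg hi

theorem balancedSplit_of_mem_of_mem {i : ι} (hs : i ∈ s) (hA : i ∈ A) :
    balancedSplit d s A i = ∑ j ∈ s.filter (· ∉ A), d j := by
  simp [balancedSplit, hs, hA]

theorem balancedSplit_of_mem_of_notMem {i : ι} (hs : i ∈ s) (hA : i ∉ A) :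
    balancedSplit d s A i = -∑ j ∈ s.filter (· ∈ A), d j := by
  simp [balancedSplit, hs, hA]

theorem sum_mul_balancedSplit : ∑ i ∈ s, d i * balancedSplit d s A i = 0 := by
  rw [← sum_filter_add_sum_filter_not s (· ∈ A)]
  have hA : ∑ i ∈ s.filter (· ∈ A), d i * balancedSplit d s A i
      = (∑ i ∈ s.filter (· ∈ A), d i) * ∑ j ∈ s.filter (· ∉ A), d j := by
    rw [sum_mul]
    refine sum_congr rfl fun i hi => ?_
    rw [mem_filter] at hi
    rw [balancedSplit_of_mem_of_mem hi.1 hi.2]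
  have hnA : ∑ i ∈ s.filter (· ∉ A), d i * balancedSplit d s A i
      = (∑ i ∈ s.filter (· ∉ A), d i) * -∑ j ∈ s.filter (· ∈ A), d j := by
    rw [sum_mul]
    refine sum_congr rfl fun i hi => ?_
    rw [mem_filter] at hi
    rw [balancedSplit_of_mem_of_notMem hi.1 hi.2]
  rw [hA, hnA]
  ring

theorem balancedSplit_ne_zero (hd : ∀ i, 0 < d i) {i j : ι} (hi : i ∈ s) (hiA : i ∈ A)
    (hj : j ∈ s) (hjA : j ∉ A) : balancedSplit d s A ≠ 0 := by
  intro h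
  have hpos : 0 < ∑ k ∈ s.filter (· ∉ A), d k :=
    sum_pos (fun k _ => hd k) ⟨j, mem_filter.mpr ⟨hj, hjA⟩⟩
  rw [← balancedSplit_of_mem_of_mem hi hiA, h] at hpos
  exact hpos.false

end BalancedSplit

theorem disconnected_cluster_obstruction_general
    (m K : ℕ) (c : Fin m → Fin K) (k₁ : Fin K)
    (V₁ V₂ : Set (Fin m)) (hdisj : Disjoint V₁ V₂)
    (L : Matrix (Fin m) (Fin m) ℝ)
    -- cluster C_{k₁} meets both components
    (h₁ : ∃ i, c i = k₁ ∧ i ∈ V₁) (h₂ : ∃ i, c i = k₁ ∧ i ∈ V₂)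
    -- C_{k₁} is isolated from the other clusters: L annihilates every vector
    -- supported on C_{k₁} and constant on C_{k₁} ∩ V₁ and on C_{k₁} ∩ V₂
    (hiso : ∀ u : Fin m → ℝ,
      (∀ i, c i ≠ k₁ → u i = 0) →
      (∀ i j, c i = k₁ → c j = k₁ → i ∈ V₁ → j ∈ V₁ → u i = u j) →
      (∀ i j, c i = k₁ → c j = k₁ → i ∈ V₂ → j ∈ V₂ → u i = u j) →
      L.mulVec u = 0) :
    ∀ d : Fin m → ℝ, (∀ i, 0 < d i) →
      ∃ u : Fin m → ℝ, u ≠ 0 ∧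
        (∀ k : Fin K, ∑ i ∈ univ.filter (fun i => c i = k), d i * u i = 0) ∧
        u ⬝ᵥ ((Matrix.diagonal d * L).mulVec u) = 0 ∧
        u ⬝ᵥ ((Matrix.diagonal d * L + Lᵀ * Matrix.diagonal d).mulVec u) = 0 := by
  classical
  intro d hd
  obtain ⟨i₁, hi₁, hi₁V⟩ := h₁
  obtain ⟨i₂, hi₂, hi₂V⟩ := h₂
  have hV₂ {i} (hi : i ∈ V₂) : i ∉ V₁ := fun h => Set.disjoint_left.mp hdisj h hi
  have hC {i} : i ∈ univ.filter (c · = k₁) ↔ c i = k₁ := by simp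
  set u := balancedSplit d (univ.filter (c · = k₁)) V₁
  have hLu : L *ᵥ u = 0 := hiso u
    (fun i hi => balancedSplit_of_notMem (mt hC.mp hi))
    (fun i j hi hj hiV hjV => (balancedSplit_of_mem_of_mem (hC.mpr hi) hiV).trans
      (balancedSplit_of_mem_of_mem (hC.mpr hj) hjV).symm)
    (fun i j hi hj hiV hjV => (balancedSplit_of_mem_of_notMem (hC.mpr hi) (hV₂ hiV)).trans
      (balancedSplit_of_mem_of_notMem (hC.mpr hj) (hV₂ hjV)).symm)
  refine ⟨u, balancedSplit_ne_zero hd (hC.mpr hi₁) hi₁V (hC.mpr hi₂) (hV₂ hi₂V),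
    fun k => ?_, dotProduct_mul_mulVec_eq_zero hLu, ?_⟩
  · obtain rfl | hk := eq_or_ne k k₁
    · exact sum_mul_balancedSplit
    · refine sum_eq_zero fun i hi => ?_
      have hu : u i = 0 := balancedSplit_of_notMem fun h => hk ((mem_filter.mp hi).2 ▸ hC.mp h)
      rw [hu, mul_zero]
  · rw [add_mulVec, dotProduct_add, dotProduct_mul_mulVec_eq_zero hLu,
      dotProduct_transpose_mul_mulVec_eq_zero hLu, add_zero]

theorem disconnected_cluster_obstruction
    (m K : ℕ) (c : Fin m → Fin K) (k₁ : Fin K)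
    (V₁ V₂ : Set (Fin m)) (hdisj : Disjoint V₁ V₂) (hcover : V₁ ∪ V₂ = Set.univ)
    (L : Matrix (Fin m) (Fin m) ℝ)
    -- block-diagonal: no edges between V₁ and V₂
    (hblock : ∀ i j, (i ∈ V₁ ∧ j ∈ V₂) ∨ (i ∈ V₂ ∧ j ∈ V₁) → L i j = 0)
    -- cluster C_{k₁} meets both components
    (h₁ : ∃ i, c i = k₁ ∧ i ∈ V₁) (h₂ : ∃ i, c i = k₁ ∧ i ∈ V₂)
    -- C_{k₁} is isolated from the other clusters: L annihilates every vector
    -- supported on C_{k₁} and constant on C_{k₁} ∩ V₁ and on C_{k₁} ∩ V₂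
    (hiso : ∀ u : Fin m → ℝ,
      (∀ i, c i ≠ k₁ → u i = 0) →
      (∀ i j, c i = k₁ → c j = k₁ → i ∈ V₁ → j ∈ V₁ → u i = u j) →
      (∀ i j, c i = k₁ → c j = k₁ → i ∈ V₂ → j ∈ V₂ → u i = u j) →
      L.mulVec u = 0) :
    ∀ d : Fin m → ℝ, (∀ i, 0 < d i) →
      ∃ u : Fin m → ℝ, u ≠ 0 ∧
        (∀ k : Fin K, ∑ i ∈ univ.filter (fun i => c i = k), d i * u i = 0) ∧
        u ⬝ᵥ ((Matrix.diagonal d * L).mulVec u) = 0 ∧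
        u ⬝ᵥ ((Matrix.diagonal d * L + Lᵀ * Matrix.diagonal d).mulVec u) = 0 :=
  disconnected_cluster_obstruction_general m K c k₁ V₁ V₂ hdisj L h₁ h₂ hiso
end

section
/- Let D be a positive definite diagonal m×m matrix, L an m×m matrix, and T a linear subspace of ℝ^m. If uᵀ(DL+LᵀD)u < 0 for all nonzero u ∈ T, then the quantity μ = min_{u∈T, u≠0} (−uᵀ(DL)^s u)/(uᵀDu) is strictly positive, and for all α > 0 and all c > α/μ, one has uᵀ[D(cL+αI_m)]^s u < 0 for every nonzero u ∈ T. -/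
/-!
Both quadratic forms are homogeneous of degree two, so the quotient `-uᵀ(DL)u / uᵀDu` is
invariant under scaling `u`; its infimum over `T \ {0}` is therefore a minimum over the compact
set of unit vectors of `T`, and it is positive because the quotient is.
Since a quadratic form only sees the symmetric part of its matrix,
`uᵀ[D(cL + αI)]^s u = c·uᵀ(DL)u + α·uᵀDu ≤ (α - cμ)·uᵀDu`, which is negative once `c > α/μ`.
-/

open Matrix

theorem Submodule.exists_isMinOn_of_smul_invariant {E : Type*} [NormedAddCommGroup E]
    [NormedSpace ℝ E] [FiniteDimensional ℝ E] (T : Submodule ℝ E) (hT : T ≠ ⊥) (r : E → ℝ)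
    (hr : ContinuousOn r {0}ᶜ) (hsmul : ∀ t : ℝ, t ≠ 0 → ∀ u, r (t • u) = r u) :
    ∃ u₀ ∈ (T : Set E) \ {0}, IsMinOn r ((T : Set E) \ {0}) u₀ := by
  set K := (T : Set E) ∩ Metric.sphere 0 1
  have hK : IsCompact K := (isCompact_sphere 0 1).inter_left T.closed_of_finiteDimensional
  have normalize_mem : ∀ u ∈ (T : Set E) \ {0}, ‖u‖⁻¹ • u ∈ K := fun u ⟨hu, hu0⟩ =>
    ⟨T.smul_mem _ hu, by simp [norm_smul, norm_ne_zero_iff.mpr hu0]⟩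
  have K_subset : K ⊆ (T : Set E) \ {0} := by
    rintro u ⟨hu, hu1⟩
    exact ⟨hu, by rintro rfl; simp at hu1⟩
  obtain ⟨v, hvT, hv0⟩ := T.exists_mem_ne_zero_of_ne_bot hT
  obtain ⟨u₀, hu₀, hmin⟩ := hK.exists_isMinOn ⟨_, normalize_mem v ⟨hvT, hv0⟩⟩
    (hr.mono fun u hu => (K_subset hu).2)
  refine ⟨u₀, K_subset hu₀, fun u hu => ?_⟩
  calc r u₀ ≤ r (‖u‖⁻¹ • u) := hmin (normalize_mem u hu)
    _ = r u := hsmul _ (inv_ne_zero (norm_ne_zero_iff.mpr hu.2)) u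

section QuadraticForm

variable {n R : Type*} [Fintype n]

theorem dotProduct_add_transpose_mulVec_self [CommSemiring R] (M : Matrix n n R) (u : n → R) :
    u ⬝ᵥ (M + Mᵀ) *ᵥ u = 2 * (u ⬝ᵥ M *ᵥ u) := by
  rw [add_mulVec, dotProduct_add, dotProduct_mulVec u Mᵀ, vecMul_transpose, dotProduct_comm,
    two_mul]

theorem dotProduct_half_smul_add_transpose_mulVec_self [Field R] [NeZero (2 : R)]
    (M : Matrix n n R) (u : n → R) :
    u ⬝ᵥ ((1 / 2 : R) • (M + Mᵀ)) *ᵥ u = u ⬝ᵥ M *ᵥ u := by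
  rw [smul_mulVec, dotProduct_smul, dotProduct_add_transpose_mulVec_self, smul_eq_mul,
    ← mul_assoc, one_div_mul_cancel two_ne_zero, one_mul]

theorem dotProduct_smul_mulVec_smul_self [CommSemiring R] (M : Matrix n n R) (t : R)
    (u : n → R) : (t • u) ⬝ᵥ M *ᵥ (t • u) = t ^ 2 * (u ⬝ᵥ M *ᵥ u) := by
  rw [mulVec_smul, smul_dotProduct, dotProduct_smul, smul_eq_mul, smul_eq_mul, ← mul_assoc, sq]

theorem dotProduct_mul_smul_add_smul_one_mulVec_self [CommSemiring R] [DecidableEq n]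
    (D L : Matrix n n R) (c α : R) (u : n → R) :
    u ⬝ᵥ (D * (c • L + α • 1)) *ᵥ u = c * (u ⬝ᵥ (D * L) *ᵥ u) + α * (u ⬝ᵥ D *ᵥ u) := by
  rw [mul_add, Matrix.mul_smul, Matrix.mul_smul, mul_one, add_mulVec, smul_mulVec, smul_mulVec,
    dotProduct_add, dotProduct_smul, dotProduct_smul, smul_eq_mul, smul_eq_mul]

theorem continuous_dotProduct_mulVec_self [Semiring R] [TopologicalSpace R]
    [IsTopologicalSemiring R] (M : Matrix n n R) : Continuous fun u : n → R => u ⬝ᵥ M *ᵥ u := by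
  simp only [dotProduct, mulVec]
  fun_prop

end QuadraticForm

theorem cluster_synchronizability_threshold
    (m : ℕ) (d : Fin m → ℝ) (hd : ∀ i, 0 < d i)
    (L : Matrix (Fin m) (Fin m) ℝ)
    (T : Submodule ℝ (Fin m → ℝ)) (hT : T ≠ ⊥)
    (hneg : ∀ u ∈ T, u ≠ 0 →
      u ⬝ᵥ ((Matrix.diagonal d * L + Lᵀ * Matrix.diagonal d).mulVec u) < 0) :
    letI μ : ℝ := sInf {r : ℝ | ∃ u ∈ T, u ≠ 0 ∧
      r = -(u ⬝ᵥ ((((1:ℝ)/2) • (Matrix.diagonal d * L + (Matrix.diagonal d * L)ᵀ)).mulVec u)) /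
          (u ⬝ᵥ ((Matrix.diagonal d).mulVec u))}
    0 < μ ∧
    ∀ α : ℝ, 0 < α → ∀ cc : ℝ, α / μ < cc →
      ∀ u ∈ T, u ≠ 0 →
        u ⬝ᵥ ((((1:ℝ)/2) •
          (Matrix.diagonal d * (cc • L + α • (1 : Matrix (Fin m) (Fin m) ℝ)) +
           (Matrix.diagonal d * (cc • L + α • (1 : Matrix (Fin m) (Fin m) ℝ)))ᵀ)).mulVec u) < 0 := by
  simp only [dotProduct_half_smul_add_transpose_mulVec_self]
  set D := diagonal d
  have hD : ∀ u ≠ 0, 0 < u ⬝ᵥ D *ᵥ u := fun u hu => by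
    simpa using (PosDef.diagonal hd).dotProduct_mulVec_pos hu
  have hDL : ∀ u ∈ T, u ≠ 0 → u ⬝ᵥ (D * L) *ᵥ u < 0 := fun u hu hu0 => by
    have h := hneg u hu hu0
    rw [show Lᵀ * D = (D * L)ᵀ by rw [transpose_mul, diagonal_transpose],
      dotProduct_add_transpose_mulVec_self] at h
    linarith
  set r : (Fin m → ℝ) → ℝ := fun u => -(u ⬝ᵥ (D * L) *ᵥ u) / (u ⬝ᵥ D *ᵥ u)
  obtain ⟨u₀, ⟨hu₀, hu₀0⟩, hmin⟩ := T.exists_isMinOn_of_smul_invariant hT r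
    ((continuous_dotProduct_mulVec_self _).neg.continuousOn.div
      (continuous_dotProduct_mulVec_self _).continuousOn fun u hu => (hD u hu).ne')
    fun t ht u => by
      simp only [r, dotProduct_smul_mulVec_smul_self, ← mul_neg]
      exact mul_div_mul_left _ _ (pow_ne_zero 2 ht)
  have hμ : sInf {x | ∃ u ∈ T, u ≠ 0 ∧ x = r u} = r u₀ :=
    IsLeast.csInf_eq ⟨⟨u₀, hu₀, hu₀0, rfl⟩, by rintro _ ⟨u, hu, hu0, rfl⟩; exact hmin ⟨hu, hu0⟩⟩
  rw [hμ]
  have hμ_pos : 0 < r u₀ := div_pos (neg_pos.mpr (hDL u₀ hu₀ hu₀0)) (hD u₀ hu₀0)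
  refine ⟨hμ_pos, fun α hα c hc u hu hu0 => ?_⟩
  have hY := hD u hu0
  have hμY : r u₀ * (u ⬝ᵥ D *ᵥ u) ≤ -(u ⬝ᵥ (D * L) *ᵥ u) := (le_div_iff₀ hY).mp (hmin ⟨hu, hu0⟩)
  have hαc : α < c * r u₀ := (div_lt_iff₀ hμ_pos).mp hc
  have hc_pos : 0 < c := (div_pos hα hμ_pos).trans hc
  rw [dotProduct_mul_smul_add_smul_one_mulVec_self]
  linarith [mul_lt_mul_of_pos_right hαc hY, mul_le_mul_of_nonneg_left hμY hc_pos.le]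
end
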